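/- arXiv:2510.26986 — 2 statements merged into one kernel-verified Lean document; each statement's English description precedes it below -/
import Mathlib

section
/- Let Φ : ℝ³ → ℝ³ be a C² diffeomorphism and let B̂ : ℝ³ → ℝ³ be a C¹ vector field. Define the 2-form push-forward B(x) := DΦ(Φ⁻¹(x)) B̂(Φ⁻¹(x)) / det DΦ(Φ⁻¹(x)). Then for every x̂ ∈ ℝ³, (div B)(Φ(x̂)) = (div B̂)(x̂) / det DΦ(x̂); that is, the divergence of the 2-form push-forward equals the 3-form push-forward (det DΦ)⁻¹(div B̂ ∘ Φ⁻¹) of the divergence. -/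
open MeasureTheory Matrix RealInnerProductSpace

noncomputable section

/-- Points/vectors in ℝ³. -/
abbrev V3 : Type := Fin 3 → ℝ

/-- Partial derivative ∂ᵢ of a scalar function on ℝ³. -/
def pder (i : Fin 3) (f : V3 → ℝ) (x : V3) : ℝ :=
  fderiv ℝ f x (Pi.single i 1)

/-- Gradient of a scalar function on ℝ³. -/
def grad (f : V3 → ℝ) (x : V3) : V3 :=
  fun i => pder i f x

/-- Curl of a vector field on ℝ³. -/
def curl (F : V3 → V3) (x : V3) : V3 :=
  ![pder 1 (fun y => F y 2) x - pder 2 (fun y => F y 1) x,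
    pder 2 (fun y => F y 0) x - pder 0 (fun y => F y 2) x,
    pder 0 (fun y => F y 1) x - pder 1 (fun y => F y 0) x]

/-- Divergence of a vector field on ℝ³. -/
def dvg (F : V3 → V3) (x : V3) : ℝ :=
  pder 0 (fun y => F y 0) x + pder 1 (fun y => F y 1) x + pder 2 (fun y => F y 2) x

/-- Cross product on ℝ³. -/
def cross (a b : V3) : V3 :=
  ![a 1 * b 2 - a 2 * b 1, a 2 * b 0 - a 0 * b 2, a 0 * b 1 - a 1 * b 0]

/-- Euclidean dot product on ℝ³. -/
def dot (a b : V3) : ℝ := ∑ i, a i * b i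

/-- Jacobian matrix (DΦ(x))ᵢⱼ = ∂Φᵢ/∂xⱼ. -/
def jac (Φ : V3 → V3) (x : V3) : Matrix (Fin 3) (Fin 3) ℝ :=
  Matrix.of fun i j => pder j (fun y => Φ y i) x

/-!
Write `A = DΦ`, `J = det A` and `v = B ∘ Φ = J⁻¹ A B̂`, so that `B̂ = adj(A) v`. The rows of
`adj A` are the cross products `∂₁Φ × ∂₂Φ`, `∂₂Φ × ∂₀Φ`, `∂₀Φ × ∂₁Φ`, and by the symmetry of
second derivatives the sum of their partial derivatives `∂ⱼ (adj A)ⱼ` vanishes (Piola's identity).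
The product rule therefore gives `div B̂ = tr(adj A · Dv)`, while the chain rule and
`DΨ(Φ x̂) = A⁻¹ = J⁻¹ adj A` give `div B (Φ x̂) = J⁻¹ tr(adj A · Dv)`.
-/

section Calculus

variable {E F G H : Type*} [NormedAddCommGroup E] [NormedSpace ℝ E]
  [NormedAddCommGroup F] [NormedSpace ℝ F] [FiniteDimensional ℝ F]
  [NormedAddCommGroup G] [NormedSpace ℝ G] [FiniteDimensional ℝ G]
  [NormedAddCommGroup H] [NormedSpace ℝ H]

theorem differentiableAt_bilinear (L : F →ₗ[ℝ] G →ₗ[ℝ] H) {u : E → F} {w : E → G} {x : E}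
    (hu : DifferentiableAt ℝ u x) (hw : DifferentiableAt ℝ w x) :
    DifferentiableAt ℝ (fun y => L (u y) (w y)) x :=
  (L.toContinuousBilinearMap.hasFDerivAt_of_bilinear hu.hasFDerivAt hw.hasFDerivAt).differentiableAt

theorem fderiv_bilinear_apply (L : F →ₗ[ℝ] G →ₗ[ℝ] H) {u : E → F} {w : E → G} {x : E}
    (hu : DifferentiableAt ℝ u x) (hw : DifferentiableAt ℝ w x) (e : E) :
    fderiv ℝ (fun y => L (u y) (w y)) x e =
      L (fderiv ℝ u x e) (w x) + L (u x) (fderiv ℝ w x e) := by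
  have h := L.toContinuousBilinearMap.fderiv_of_bilinear hu hw
  simp only [LinearMap.toContinuousBilinearMap_apply] at h
  simp [h, add_comm]

variable {n : Type*} [Fintype n] {M : E → Matrix n n ℝ} {x : E}

theorem differentiableAt_det_of_entries [DecidableEq n]
    (hM : ∀ i j, DifferentiableAt ℝ (fun y => M y i j) x) :
    DifferentiableAt ℝ (fun y => (M y).det) x := by
  simp only [det_apply]
  fun_prop

theorem differentiableAt_mulVec_of_entries {v : E → n → ℝ}
    (hM : ∀ i j, DifferentiableAt ℝ (fun y => M y i j) x) (hv : DifferentiableAt ℝ v x) :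
    DifferentiableAt ℝ (fun y => M y *ᵥ v y) x := by
  have hv' := differentiableAt_pi.1 hv
  refine differentiableAt_pi.2 fun i => ?_
  simp only [mulVec, dotProduct]
  fun_prop

end Calculus

theorem adjugate_fin_three_eq_cross {R : Type*} [CommRing R] (A : Matrix (Fin 3) (Fin 3) R) :
    A.adjugate = ![Aᵀ 1 ⨯₃ Aᵀ 2, Aᵀ 2 ⨯₃ Aᵀ 0, Aᵀ 0 ⨯₃ Aᵀ 1] := by
  ext i j
  fin_cases i <;> fin_cases j <;> simp [adjugate_fin_three, cross_apply] <;> ring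

section VectorCalculus

variable {F G Φ : V3 → V3} {x : V3}

theorem pder_apply_eq_fderiv (hF : DifferentiableAt ℝ F x) (i j : Fin 3) :
    pder j (fun y => F y i) x = fderiv ℝ F x (Pi.single j 1) i := by
  change fderiv ℝ (ContinuousLinearMap.proj (R := ℝ) (φ := fun _ : Fin 3 => ℝ) i ∘ F) x _ = _
  rw [((ContinuousLinearMap.proj i).hasFDerivAt.comp x hF.hasFDerivAt).fderiv]
  rfl

theorem jac_eq_toMatrix' (hF : DifferentiableAt ℝ F x) :
    jac F x = LinearMap.toMatrix' (fderiv ℝ F x : V3 →ₗ[ℝ] V3) := by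
  ext i j
  rw [LinearMap.toMatrix'_apply, jac, of_apply, pder_apply_eq_fderiv hF]
  rfl

theorem jac_comp (hF : DifferentiableAt ℝ F (G x)) (hG : DifferentiableAt ℝ G x) :
    jac (F ∘ G) x = jac F (G x) * jac G x := by
  rw [jac_eq_toMatrix' (hF.comp x hG), jac_eq_toMatrix' hF, jac_eq_toMatrix' hG,
    fderiv_comp x hF hG, ← LinearMap.toMatrix'_comp]
  rfl

theorem jac_id : jac id x = 1 := by
  rw [jac_eq_toMatrix' differentiableAt_id, fderiv_id]
  exact LinearMap.toMatrix'_id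

theorem jac_mul_jac_of_leftInverse (h : Function.LeftInverse G F)
    (hG : DifferentiableAt ℝ G (F x)) (hF : DifferentiableAt ℝ F x) :
    jac G (F x) * jac F x = 1 := by
  rw [← jac_comp hG hF, h.comp_eq_id, jac_id]

theorem dvg_eq_trace_jac : dvg F x = (jac F x).trace := by
  simp [dvg, trace, jac, Fin.sum_univ_three]

theorem dvg_mulVec {M : V3 → Matrix (Fin 3) (Fin 3) ℝ} {v : V3 → V3}
    (hM : ∀ j, DifferentiableAt ℝ (fun y => M y j) x) (hv : DifferentiableAt ℝ v x) :
    dvg (fun y => M y *ᵥ v y) x =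
      (∑ j, fderiv ℝ (fun y => M y j) x (Pi.single j 1)) ⬝ᵥ v x + (M x * jac v x).trace := by
  have hrow : ∀ j, pder j (fun y => (M y *ᵥ v y) j) x =
      fderiv ℝ (fun y => M y j) x (Pi.single j 1) ⬝ᵥ v x +
        M x j ⬝ᵥ fderiv ℝ v x (Pi.single j 1) :=
    fun j => fderiv_bilinear_apply (dotProductBilin ℝ ℝ) (hM j) hv _
  simp only [dvg, hrow, trace, diag, mul_apply, jac, of_apply, pder_apply_eq_fderiv hv,
    Fin.sum_univ_three, dotProduct, Pi.add_apply]
  ring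

theorem transpose_jac_apply (hΦ : DifferentiableAt ℝ Φ x) (k : Fin 3) :
    (jac Φ x)ᵀ k = fderiv ℝ Φ x (Pi.single k 1) := by
  ext i
  rw [transpose_apply, jac, of_apply, pder_apply_eq_fderiv hΦ]

theorem differentiable_transpose_jac_apply (hΦ : ContDiff ℝ 2 Φ) (k : Fin 3) :
    Differentiable ℝ (fun y => (jac Φ y)ᵀ k) := by
  simp only [transpose_jac_apply ((hΦ.differentiable (by norm_num)) _)]
  exact ((hΦ.fderiv_right (m := 1) le_rfl).clm_apply contDiff_const).differentiable one_ne_zero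

theorem differentiable_jac_apply (hΦ : ContDiff ℝ 2 Φ) (i k : Fin 3) :
    Differentiable ℝ (fun y => jac Φ y i k) :=
  fun y => differentiableAt_pi.1 (differentiable_transpose_jac_apply hΦ k y) i

theorem differentiable_adjugate_jac_apply (hΦ : ContDiff ℝ 2 Φ) (j : Fin 3) :
    Differentiable ℝ (fun y => (jac Φ y).adjugate j) := by
  have hc := differentiable_transpose_jac_apply hΦ
  simp only [adjugate_fin_three_eq_cross]
  fin_cases j <;> exact fun y => differentiableAt_bilinear crossProduct (hc _ y) (hc _ y)

theorem sum_fderiv_adjugate_jac_apply_eq_zero (hΦ : ContDiff ℝ 2 Φ) (x : V3) :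
    ∑ j, fderiv ℝ (fun y => (jac Φ y).adjugate j) x (Pi.single j 1) = 0 := by
  have hc := differentiable_transpose_jac_apply hΦ
  have hD : ∀ j k, fderiv ℝ (fun y => (jac Φ y)ᵀ k) x (Pi.single j 1) =
      fderiv ℝ (fderiv ℝ Φ) x (Pi.single j 1) (Pi.single k 1) := fun j k => by
    simp only [transpose_jac_apply ((hΦ.differentiable (by norm_num)) _)]
    rw [fderiv_clm_apply (((hΦ.fderiv_right (m := 1) le_rfl).differentiable one_ne_zero) x)
      (differentiableAt_const _)]
    simp
  have hsym := (hΦ.contDiffAt (x := x)).isSymmSndFDerivAt (by simp)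
  simp only [adjugate_fin_three_eq_cross, Fin.sum_univ_three, cons_val_zero, cons_val_one,
    cons_val_two, tail_cons, head_cons, fderiv_bilinear_apply crossProduct (hc _ x) (hc _ x), hD]
  rw [hsym (Pi.single 1 1) (Pi.single 0 1), hsym (Pi.single 2 1) (Pi.single 0 1),
    hsym (Pi.single 2 1) (Pi.single 1 1)]
  simp only [← cross_anticomm _ ((jac Φ x)ᵀ _)]
  abel

theorem dvg_adjugate_jac_mulVec (hΦ : ContDiff ℝ 2 Φ) {v : V3 → V3}
    (hv : DifferentiableAt ℝ v x) :
    dvg (fun y => (jac Φ y).adjugate *ᵥ v y) x = ((jac Φ x).adjugate * jac v x).trace := by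
  rw [dvg_mulVec (fun j => differentiable_adjugate_jac_apply hΦ j x) hv,
    sum_fderiv_adjugate_jac_apply_eq_zero hΦ, zero_dotProduct, zero_add]

end VectorCalculus

theorem pushforward_two_form_div_general
    (Φ Ψ : V3 → V3) (hΦ : ContDiff ℝ 2 Φ) (hΨ : ContDiff ℝ 2 Ψ)
    (hleft : Function.LeftInverse Ψ Φ)
    (Bhat : V3 → V3) (hBhat : ContDiff ℝ 1 Bhat)
    (B : V3 → V3)
    (hB : B = fun x => ((jac Φ (Ψ x)).det)⁻¹ • (jac Φ (Ψ x)).mulVec (Bhat (Ψ x))) :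
    ∀ xhat : V3,
      dvg B (Φ xhat) = ((jac Φ xhat).det)⁻¹ * dvg Bhat xhat := by
  intro xhat
  have hΨd : Differentiable ℝ Ψ := hΨ.differentiable (by norm_num)
  have hinv : ∀ y, jac Ψ (Φ y) * jac Φ y = 1 := fun y =>
    jac_mul_jac_of_leftInverse hleft (hΨd _) ((hΦ.differentiable (by norm_num)) y)
  set v : V3 → V3 := fun y => ((jac Φ y).det)⁻¹ • jac Φ y *ᵥ Bhat y
  have hv : DifferentiableAt ℝ v xhat :=
    ((differentiableAt_det_of_entries fun i k => differentiable_jac_apply hΦ i k xhat).inv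
      (det_ne_zero_of_left_inverse (hinv xhat))).smul
      (differentiableAt_mulVec_of_entries (fun i k => differentiable_jac_apply hΦ i k xhat)
        ((hBhat.differentiable one_ne_zero) xhat))
  have hBhat_eq : Bhat = fun y => (jac Φ y).adjugate *ᵥ v y := funext fun y => by
    rw [mulVec_smul, mulVec_mulVec, adjugate_mul, smul_mulVec, one_mulVec, smul_smul,
      inv_mul_cancel₀ (det_ne_zero_of_left_inverse (hinv y)), one_smul]
  have hΨjac : jac Ψ (Φ xhat) = ((jac Φ xhat).det)⁻¹ • (jac Φ xhat).adjugate := by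
    rw [← inv_eq_left_inv (hinv xhat), inv_def, Ring.inverse_eq_inv']
  calc dvg B (Φ xhat) = (jac v xhat * jac Ψ (Φ xhat)).trace := by
        rw [dvg_eq_trace_jac, show B = v ∘ Ψ from hB, jac_comp (by rwa [hleft]) (hΨd _), hleft]
    _ = ((jac Φ xhat).det)⁻¹ * ((jac Φ xhat).adjugate * jac v xhat).trace := by
        rw [hΨjac, mul_smul_comm, trace_smul, trace_mul_comm, smul_eq_mul]
    _ = ((jac Φ xhat).det)⁻¹ * dvg Bhat xhat := by
        rw [← dvg_adjugate_jac_mulVec hΦ hv, ← hBhat_eq]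

/-- the divergence of the 2-form push-forward equals the 3-form
push-forward of the divergence. -/
theorem pushforward_two_form_div
    (Φ Ψ : V3 → V3) (hΦ : ContDiff ℝ 2 Φ) (hΨ : ContDiff ℝ 2 Ψ)
    (hleft : Function.LeftInverse Ψ Φ) (hright : Function.RightInverse Ψ Φ)
    (Bhat : V3 → V3) (hBhat : ContDiff ℝ 1 Bhat)
    (B : V3 → V3)
    (hB : B = fun x => ((jac Φ (Ψ x)).det)⁻¹ • (jac Φ (Ψ x)).mulVec (Bhat (Ψ x))) :
    ∀ xhat : V3,
      dvg B (Φ xhat) = ((jac Φ xhat).det)⁻¹ * dvg Bhat xhat :=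
  pushforward_two_form_div_general Φ Ψ hΦ hΨ hleft Bhat hBhat B hB

end
end

section
/- Let B⁰, B¹, v : ℝ³ → ℝ³ be smooth compactly supported vector fields, let δt, η ≥ 0, set B^{1/2} := (B⁰ + B¹)/2 and J := curl B^{1/2}, and suppose the implicit midpoint update B¹ = B⁰ + δt · curl(v × B^{1/2} − ηJ) holds. Then ½∫_{ℝ³}|B¹|² dx − ½∫_{ℝ³}|B⁰|² dx = −δt ∫_{ℝ³} (J × B^{1/2}) · v dx − δt·η ∫_{ℝ³} |J|² dx. (This is the exact discrete energy dissipation identity for one midpoint time step of the magnetic relaxation algorithm; in particular, if v = 𝒜(J × B^{1/2}) for a positive semi-definite operator 𝒜, the energy decreases monotonically.) -/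
open MeasureTheory Matrix RealInnerProductSpace

noncomputable section

/-! ### Auxiliary lemmas -/

lemma comp_cd {f : V3 → V3} (hf : ContDiff ℝ (⊤ : ℕ∞) f) (i : Fin 3) :
    ContDiff ℝ (⊤ : ℕ∞) (fun y => f y i) := (contDiff_pi.mp hf) i

lemma comp_cs {f : V3 → V3} (hsf : HasCompactSupport f) (i : Fin 3) :
    HasCompactSupport (fun y => f y i) :=
  hsf.comp_left (g := fun w : V3 => w i) rfl

lemma pder_cd {f : V3 → ℝ} (hf : ContDiff ℝ (⊤ : ℕ∞) f) (i : Fin 3) :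
    ContDiff ℝ (⊤ : ℕ∞) (pder i f) :=
  (hf.fderiv_right ((by simp))).clm_apply contDiff_const

lemma pder_cs {f : V3 → ℝ} (hsf : HasCompactSupport f) (i : Fin 3) :
    HasCompactSupport (pder i f) :=
  hsf.fderiv_apply ℝ (Pi.single i 1)

lemma integ_mul {f g : V3 → ℝ} (hf : Continuous f) (hg : Continuous g)
    (hsf : HasCompactSupport f) : Integrable (fun x => f x * g x) :=
  (hf.mul hg).integrable_of_hasCompactSupport hsf.mul_right

lemma hcs_sub {β : Type*} [SubtractionMonoid β] {f g : V3 → β}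
    (hf : HasCompactSupport f) (hg : HasCompactSupport g) :
    HasCompactSupport (fun x => f x - g x) := by
  apply HasCompactSupport.intro (hf.union hg)
  intro x hx
  simp only [Set.mem_union, not_or] at hx
  rw [image_eq_zero_of_notMem_tsupport hx.1, image_eq_zero_of_notMem_tsupport hx.2, sub_zero]

lemma hcs_pi3 {f : V3 → V3} (h : ∀ i, HasCompactSupport fun y => f y i) :
    HasCompactSupport f := by
  apply HasCompactSupport.intro (((h 0).union (h 1)).union (h 2))
  intro x hx
  simp only [Set.mem_union, not_or] at hx
  funext i
  have h0 : f x 0 = 0 := image_eq_zero_of_notMem_tsupport (f := fun y => f y 0) hx.1.1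
  have h1 : f x 1 = 0 := image_eq_zero_of_notMem_tsupport (f := fun y => f y 1) hx.1.2
  have h2 : f x 2 = 0 := image_eq_zero_of_notMem_tsupport (f := fun y => f y 2) hx.2
  fin_cases i <;> simpa

lemma curl_cd {f : V3 → V3} (hf : ContDiff ℝ (⊤ : ℕ∞) f) : ContDiff ℝ (⊤ : ℕ∞) (fun x => curl f x) := by
  apply contDiff_pi.mpr
  intro i
  fin_cases i <;>
    simp only [curl, Matrix.cons_val_zero, Matrix.cons_val_one, Matrix.head_cons,
      Matrix.cons_val_two, Matrix.tail_cons, Fin.isValue] <;>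
    exact (pder_cd (comp_cd hf _) _).sub (pder_cd (comp_cd hf _) _)

lemma curl_cs {f : V3 → V3} (hsf : HasCompactSupport f) :
    HasCompactSupport (fun x => curl f x) := by
  apply hcs_pi3
  intro i
  fin_cases i <;>
    simp only [curl, Matrix.cons_val_zero, Matrix.cons_val_one, Matrix.head_cons,
      Matrix.cons_val_two, Matrix.tail_cons, Fin.isValue] <;>
    exact hcs_sub (pder_cs (comp_cs hsf _) _) (pder_cs (comp_cs hsf _) _)

lemma dot_cont {f g : V3 → V3} (hf : Continuous f) (hg : Continuous g) :
    Continuous fun x => dot (f x) (g x) := by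
  unfold dot
  exact continuous_finset_sum _ fun i _ =>
    ((continuous_apply i).comp hf).mul ((continuous_apply i).comp hg)

lemma dot_cs_left {f g : V3 → V3} (hsf : HasCompactSupport f) :
    HasCompactSupport fun x => dot (f x) (g x) := by
  apply HasCompactSupport.intro hsf
  intro x hx
  rw [image_eq_zero_of_notMem_tsupport hx]
  simp [dot]

lemma dot_cs_right {f g : V3 → V3} (hsg : HasCompactSupport g) :
    HasCompactSupport fun x => dot (f x) (g x) := by
  apply HasCompactSupport.intro hsg
  intro x hx
  rw [image_eq_zero_of_notMem_tsupport hx]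
  simp [dot]

lemma cross_cont {f g : V3 → V3} (hf : Continuous f) (hg : Continuous g) :
    Continuous fun x => cross (f x) (g x) := by
  apply continuous_pi
  intro i
  fin_cases i <;>
    simp only [cross, Matrix.cons_val_zero, Matrix.cons_val_one, Matrix.head_cons,
      Matrix.cons_val_two, Matrix.tail_cons, Fin.isValue] <;>
    exact (((continuous_apply _).comp hf).mul ((continuous_apply _).comp hg)).sub
      (((continuous_apply _).comp hf).mul ((continuous_apply _).comp hg))

lemma ibp (f g : V3 → ℝ) (hf : ContDiff ℝ (⊤ : ℕ∞) f) (hg : ContDiff ℝ (⊤ : ℕ∞) g)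
    (hsf : HasCompactSupport f) (hsg : HasCompactSupport g) (i : Fin 3) :
    ∫ x : V3, pder i f x * g x = - ∫ x : V3, f x * pder i g x := by
  have := integral_mul_fderiv_eq_neg_fderiv_mul_of_integrable
    (μ := (volume : Measure V3)) (f := f) (g := g) (v := Pi.single i 1)
    (integ_mul ((pder_cd hf i).continuous) hg.continuous (pder_cs hsf i))
    (integ_mul hf.continuous ((pder_cd hg i).continuous) hsf)
    (integ_mul hf.continuous hg.continuous hsf)
    (fun x _ => hf.differentiable (by simp) x) (fun x _ => hg.differentiable (by simp) x)
  simp only [pder] at *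
  linarith [this]

lemma curl_dot_ibp (A B : V3 → V3) (hA : ContDiff ℝ (⊤ : ℕ∞) A) (hB : ContDiff ℝ (⊤ : ℕ∞) B)
    (hsA : HasCompactSupport A) (hsB : HasCompactSupport B) :
    ∫ x : V3, dot (curl A x) (B x) = ∫ x : V3, dot (A x) (curl B x) := by
  have hintL : ∀ j k i : Fin 3,
      Integrable (fun x : V3 => pder j (fun y => A y k) x * B x i) := fun j k i =>
    integ_mul (pder_cd (comp_cd hA k) j).continuous (comp_cd hB i).continuous
      (pder_cs (comp_cs hsA k) j)
  have hintR : ∀ i j k : Fin 3,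
      Integrable (fun x : V3 => A x i * pder j (fun y => B y k) x) := fun i j k =>
    integ_mul (comp_cd hA i).continuous (pder_cd (comp_cd hB k) j).continuous
      (comp_cs hsA i)
  have ib : ∀ j k i : Fin 3,
      (∫ x : V3, pder j (fun y => A y k) x * B x i)
        = - ∫ x : V3, A x k * pder j (fun y => B y i) x := fun j k i =>
    ibp (fun y => A y k) (fun y => B y i) (comp_cd hA k) (comp_cd hB i)
      (comp_cs hsA k) (comp_cs hsB i) j
  have a1 : Integrable (fun x : V3 => pder 1 (fun y => A y 2) x * B x 0
      - pder 2 (fun y => A y 1) x * B x 0) := (hintL 1 2 0).sub (hintL 2 1 0)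
  have a2 : Integrable (fun x : V3 => pder 2 (fun y => A y 0) x * B x 1
      - pder 0 (fun y => A y 2) x * B x 1) := (hintL 2 0 1).sub (hintL 0 2 1)
  have a3 : Integrable (fun x : V3 => pder 0 (fun y => A y 1) x * B x 2
      - pder 1 (fun y => A y 0) x * B x 2) := (hintL 0 1 2).sub (hintL 1 0 2)
  have a12 : Integrable (fun x : V3 => (pder 1 (fun y => A y 2) x * B x 0
      - pder 2 (fun y => A y 1) x * B x 0)
      + (pder 2 (fun y => A y 0) x * B x 1 - pder 0 (fun y => A y 2) x * B x 1)) := a1.add a2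
  have s1 : ∫ x : V3, (pder 1 (fun y => A y 2) x * B x 0 - pder 2 (fun y => A y 1) x * B x 0)
      = (∫ x : V3, pder 1 (fun y => A y 2) x * B x 0)
        - ∫ x : V3, pder 2 (fun y => A y 1) x * B x 0 := integral_sub (hintL 1 2 0) (hintL 2 1 0)
  have s2 : ∫ x : V3, (pder 2 (fun y => A y 0) x * B x 1 - pder 0 (fun y => A y 2) x * B x 1)
      = (∫ x : V3, pder 2 (fun y => A y 0) x * B x 1)
        - ∫ x : V3, pder 0 (fun y => A y 2) x * B x 1 := integral_sub (hintL 2 0 1) (hintL 0 2 1)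
  have s3 : ∫ x : V3, (pder 0 (fun y => A y 1) x * B x 2 - pder 1 (fun y => A y 0) x * B x 2)
      = (∫ x : V3, pder 0 (fun y => A y 1) x * B x 2)
        - ∫ x : V3, pder 1 (fun y => A y 0) x * B x 2 := integral_sub (hintL 0 1 2) (hintL 1 0 2)
  have sB : ∫ x : V3, ((pder 1 (fun y => A y 2) x * B x 0 - pder 2 (fun y => A y 1) x * B x 0)
        + (pder 2 (fun y => A y 0) x * B x 1 - pder 0 (fun y => A y 2) x * B x 1))
      = (∫ x : V3, (pder 1 (fun y => A y 2) x * B x 0 - pder 2 (fun y => A y 1) x * B x 0))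
        + ∫ x : V3, (pder 2 (fun y => A y 0) x * B x 1 - pder 0 (fun y => A y 2) x * B x 1) :=
    integral_add a1 a2
  have sA : ∫ x : V3, (((pder 1 (fun y => A y 2) x * B x 0 - pder 2 (fun y => A y 1) x * B x 0)
        + (pder 2 (fun y => A y 0) x * B x 1 - pder 0 (fun y => A y 2) x * B x 1))
        + (pder 0 (fun y => A y 1) x * B x 2 - pder 1 (fun y => A y 0) x * B x 2))
      = (∫ x : V3, ((pder 1 (fun y => A y 2) x * B x 0 - pder 2 (fun y => A y 1) x * B x 0)
        + (pder 2 (fun y => A y 0) x * B x 1 - pder 0 (fun y => A y 2) x * B x 1)))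
        + ∫ x : V3, (pder 0 (fun y => A y 1) x * B x 2 - pder 1 (fun y => A y 0) x * B x 2) :=
    integral_add a12 a3
  have h0 : ∫ x : V3, dot (curl A x) (B x)
      = ∫ x : V3, (((pder 1 (fun y => A y 2) x * B x 0 - pder 2 (fun y => A y 1) x * B x 0)
        + (pder 2 (fun y => A y 0) x * B x 1 - pder 0 (fun y => A y 2) x * B x 1))
        + (pder 0 (fun y => A y 1) x * B x 2 - pder 1 (fun y => A y 0) x * B x 2)) := by
    congr 1
    funext x
    simp [dot, curl, Fin.sum_univ_three]
    ring
  have eL : (∫ x : V3, dot (curl A x) (B x))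
      = (((∫ x : V3, pder 1 (fun y => A y 2) x * B x 0)
          - ∫ x : V3, pder 2 (fun y => A y 1) x * B x 0)
        + ((∫ x : V3, pder 2 (fun y => A y 0) x * B x 1)
          - ∫ x : V3, pder 0 (fun y => A y 2) x * B x 1))
        + ((∫ x : V3, pder 0 (fun y => A y 1) x * B x 2)
          - ∫ x : V3, pder 1 (fun y => A y 0) x * B x 2) := by
    linarith [h0, sA, sB, s1, s2, s3]
  have b1 : Integrable (fun x : V3 => A x 0 * pder 1 (fun y => B y 2) x
      - A x 0 * pder 2 (fun y => B y 1) x) := (hintR 0 1 2).sub (hintR 0 2 1)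
  have b2 : Integrable (fun x : V3 => A x 1 * pder 2 (fun y => B y 0) x
      - A x 1 * pder 0 (fun y => B y 2) x) := (hintR 1 2 0).sub (hintR 1 0 2)
  have b3 : Integrable (fun x : V3 => A x 2 * pder 0 (fun y => B y 1) x
      - A x 2 * pder 1 (fun y => B y 0) x) := (hintR 2 0 1).sub (hintR 2 1 0)
  have b12 : Integrable (fun x : V3 => (A x 0 * pder 1 (fun y => B y 2) x
      - A x 0 * pder 2 (fun y => B y 1) x)
      + (A x 1 * pder 2 (fun y => B y 0) x - A x 1 * pder 0 (fun y => B y 2) x)) := b1.add b2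
  have t1 : ∫ x : V3, (A x 0 * pder 1 (fun y => B y 2) x - A x 0 * pder 2 (fun y => B y 1) x)
      = (∫ x : V3, A x 0 * pder 1 (fun y => B y 2) x)
        - ∫ x : V3, A x 0 * pder 2 (fun y => B y 1) x := integral_sub (hintR 0 1 2) (hintR 0 2 1)
  have t2 : ∫ x : V3, (A x 1 * pder 2 (fun y => B y 0) x - A x 1 * pder 0 (fun y => B y 2) x)
      = (∫ x : V3, A x 1 * pder 2 (fun y => B y 0) x)
        - ∫ x : V3, A x 1 * pder 0 (fun y => B y 2) x := integral_sub (hintR 1 2 0) (hintR 1 0 2)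
  have t3 : ∫ x : V3, (A x 2 * pder 0 (fun y => B y 1) x - A x 2 * pder 1 (fun y => B y 0) x)
      = (∫ x : V3, A x 2 * pder 0 (fun y => B y 1) x)
        - ∫ x : V3, A x 2 * pder 1 (fun y => B y 0) x := integral_sub (hintR 2 0 1) (hintR 2 1 0)
  have tB : ∫ x : V3, ((A x 0 * pder 1 (fun y => B y 2) x - A x 0 * pder 2 (fun y => B y 1) x)
        + (A x 1 * pder 2 (fun y => B y 0) x - A x 1 * pder 0 (fun y => B y 2) x))
      = (∫ x : V3, (A x 0 * pder 1 (fun y => B y 2) x - A x 0 * pder 2 (fun y => B y 1) x))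
        + ∫ x : V3, (A x 1 * pder 2 (fun y => B y 0) x - A x 1 * pder 0 (fun y => B y 2) x) :=
    integral_add b1 b2
  have tA : ∫ x : V3, (((A x 0 * pder 1 (fun y => B y 2) x - A x 0 * pder 2 (fun y => B y 1) x)
        + (A x 1 * pder 2 (fun y => B y 0) x - A x 1 * pder 0 (fun y => B y 2) x))
        + (A x 2 * pder 0 (fun y => B y 1) x - A x 2 * pder 1 (fun y => B y 0) x))
      = (∫ x : V3, ((A x 0 * pder 1 (fun y => B y 2) x - A x 0 * pder 2 (fun y => B y 1) x)
        + (A x 1 * pder 2 (fun y => B y 0) x - A x 1 * pder 0 (fun y => B y 2) x)))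
        + ∫ x : V3, (A x 2 * pder 0 (fun y => B y 1) x - A x 2 * pder 1 (fun y => B y 0) x) :=
    integral_add b12 b3
  have g0 : ∫ x : V3, dot (A x) (curl B x)
      = ∫ x : V3, (((A x 0 * pder 1 (fun y => B y 2) x - A x 0 * pder 2 (fun y => B y 1) x)
        + (A x 1 * pder 2 (fun y => B y 0) x - A x 1 * pder 0 (fun y => B y 2) x))
        + (A x 2 * pder 0 (fun y => B y 1) x - A x 2 * pder 1 (fun y => B y 0) x)) := by
    congr 1
    funext x
    simp [dot, curl, Fin.sum_univ_three]
    ring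
  have eR : (∫ x : V3, dot (A x) (curl B x))
      = (((∫ x : V3, A x 0 * pder 1 (fun y => B y 2) x)
          - ∫ x : V3, A x 0 * pder 2 (fun y => B y 1) x)
        + ((∫ x : V3, A x 1 * pder 2 (fun y => B y 0) x)
          - ∫ x : V3, A x 1 * pder 0 (fun y => B y 2) x))
        + ((∫ x : V3, A x 2 * pder 0 (fun y => B y 1) x)
          - ∫ x : V3, A x 2 * pder 1 (fun y => B y 0) x) := by
    linarith [g0, tA, tB, t1, t2, t3]
  rw [eL, eR, ib 1 2 0, ib 2 1 0, ib 2 0 1, ib 0 2 1, ib 0 1 2, ib 1 0 2]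
  ring

/-- exact discrete energy dissipation identity for one implicit
midpoint time step of the magnetic relaxation algorithm. -/
theorem discrete_energy_dissipation
    (B₀ B₁ v : V3 → V3) (δt η : ℝ) (hδt : 0 ≤ δt) (hη : 0 ≤ η)
    (hB₀ : ContDiff ℝ (⊤ : ℕ∞) B₀) (hB₁ : ContDiff ℝ (⊤ : ℕ∞) B₁) (hv : ContDiff ℝ (⊤ : ℕ∞) v)
    (hsB₀ : HasCompactSupport B₀) (hsB₁ : HasCompactSupport B₁) (hsv : HasCompactSupport v)
    (Bh J : V3 → V3)
    (hBh : Bh = fun y => (1 / 2 : ℝ) • (B₀ y + B₁ y))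
    (hJ : J = fun y => curl Bh y)
    (hupdate : B₁ = fun y => B₀ y + δt • curl (fun z => cross (v z) (Bh z) - η • J z) y) :
    (1 / 2) * (∫ x : V3, dot (B₁ x) (B₁ x)) - (1 / 2) * (∫ x : V3, dot (B₀ x) (B₀ x))
      = -δt * (∫ x : V3, dot (cross (J x) (Bh x)) (v x))
        - δt * η * (∫ x : V3, dot (J x) (J x)) := by
  set W : V3 → V3 := fun z => cross (v z) (Bh z) - η • J z with hW
  -- regularity facts
  have hBhcd : ContDiff ℝ (⊤ : ℕ∞) Bh := by
    rw [hBh]; exact (hB₀.add hB₁).const_smul _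
  have hBhcs : HasCompactSupport Bh := by
    rw [hBh]
    exact (hsB₀.add hsB₁).comp_left (g := fun w : V3 => (1 / 2 : ℝ) • w) (smul_zero _)
  have hJcd : ContDiff ℝ (⊤ : ℕ∞) J := by rw [hJ]; exact curl_cd hBhcd
  have hJcs : HasCompactSupport J := by rw [hJ]; exact curl_cs hBhcs
  have hWcd : ContDiff ℝ (⊤ : ℕ∞) W := by
    rw [hW]
    apply contDiff_pi.mpr
    intro i
    fin_cases i <;>
      simp only [cross, Pi.sub_apply, Pi.smul_apply, smul_eq_mul, Matrix.cons_val_zero,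
        Matrix.cons_val_one, Matrix.head_cons, Matrix.cons_val_two, Matrix.tail_cons,
        Fin.isValue] <;>
      exact (((comp_cd hv _).mul (comp_cd hBhcd _)).sub
          ((comp_cd hv _).mul (comp_cd hBhcd _))).sub (contDiff_const.mul (comp_cd hJcd _))
  have hWcs : HasCompactSupport W := by
    rw [hW]
    apply hcs_pi3
    intro i
    fin_cases i <;>
      simp only [cross, Pi.sub_apply, Pi.smul_apply, smul_eq_mul, Matrix.cons_val_zero,
        Matrix.cons_val_one, Matrix.head_cons, Matrix.cons_val_two, Matrix.tail_cons,
        Fin.isValue] <;>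
      exact hcs_sub (hcs_sub (comp_cs hsv _).mul_right (comp_cs hsv _).mul_right)
        (comp_cs hJcs _).mul_left
  -- integrabilities
  have i0 : Integrable (fun x : V3 => dot (B₀ x) (B₀ x)) :=
    (dot_cont hB₀.continuous hB₀.continuous).integrable_of_hasCompactSupport (dot_cs_left hsB₀)
  have i1 : Integrable (fun x : V3 => dot (B₁ x) (B₁ x)) :=
    (dot_cont hB₁.continuous hB₁.continuous).integrable_of_hasCompactSupport (dot_cs_left hsB₁)
  have i3 : Integrable (fun x : V3 => dot (cross (J x) (Bh x)) (v x)) :=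
    (dot_cont (cross_cont hJcd.continuous hBhcd.continuous)
      hv.continuous).integrable_of_hasCompactSupport (dot_cs_right hsv)
  have i4 : Integrable (fun x : V3 => dot (J x) (J x)) :=
    (dot_cont hJcd.continuous hJcd.continuous).integrable_of_hasCompactSupport (dot_cs_left hJcs)
  -- step 1 : energy difference = δt ∫ (curl W) · Bh
  have step1 : (1 / 2) * (∫ x : V3, dot (B₁ x) (B₁ x))
        - (1 / 2) * (∫ x : V3, dot (B₀ x) (B₀ x))
      = δt * ∫ x : V3, dot (curl W x) (Bh x) := by
    have e1 : ∫ x : V3, ((1 / 2) * dot (B₁ x) (B₁ x) - (1 / 2) * dot (B₀ x) (B₀ x))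
        = ∫ x : V3, δt * dot (curl W x) (Bh x) := by
      congr 1
      funext x
      have hx : B₁ x = B₀ x + δt • curl W x := congrFun hupdate x
      have hbx : Bh x = (1 / 2 : ℝ) • (B₀ x + B₁ x) := by rw [hBh]
      rw [hbx, hx]
      simp only [dot, Fin.sum_univ_three, Pi.add_apply, Pi.smul_apply, smul_eq_mul]
      ring
    have e2 : ∫ x : V3, ((1 / 2) * dot (B₁ x) (B₁ x) - (1 / 2) * dot (B₀ x) (B₀ x))
        = (∫ x : V3, (1 / 2) * dot (B₁ x) (B₁ x))
          - ∫ x : V3, (1 / 2) * dot (B₀ x) (B₀ x) :=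
      integral_sub (i1.const_mul _) (i0.const_mul _)
    have e3 : ∫ x : V3, (1 / 2 : ℝ) * dot (B₁ x) (B₁ x)
        = (1 / 2) * ∫ x : V3, dot (B₁ x) (B₁ x) := integral_const_mul _ _
    have e4 : ∫ x : V3, (1 / 2 : ℝ) * dot (B₀ x) (B₀ x)
        = (1 / 2) * ∫ x : V3, dot (B₀ x) (B₀ x) := integral_const_mul _ _
    have e5 : ∫ x : V3, δt * dot (curl W x) (Bh x)
        = δt * ∫ x : V3, dot (curl W x) (Bh x) := integral_const_mul _ _
    linarith [e1, e2, e3, e4, e5]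
  -- step 2 : integration by parts
  have step2 : ∫ x : V3, dot (curl W x) (Bh x) = ∫ x : V3, dot (W x) (J x) := by
    rw [curl_dot_ibp W Bh hWcd hBhcd hWcs hBhcs]
    congr 1
    funext x
    rw [hJ]
  -- step 3 : pointwise triple-product identity
  have step3 : ∫ x : V3, dot (W x) (J x)
      = -(∫ x : V3, dot (cross (J x) (Bh x)) (v x)) - η * ∫ x : V3, dot (J x) (J x) := by
    have f1 : ∫ x : V3, dot (W x) (J x)
        = ∫ x : V3, (-dot (cross (J x) (Bh x)) (v x) - η * dot (J x) (J x)) := by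
      congr 1
      funext x
      rw [hW]
      simp only [dot, cross, Fin.sum_univ_three, Pi.sub_apply, Pi.smul_apply, smul_eq_mul,
        Matrix.cons_val_zero, Matrix.cons_val_one, Matrix.head_cons, Matrix.cons_val_two,
        Matrix.tail_cons]
      ring
    have f2 : ∫ x : V3, (-dot (cross (J x) (Bh x)) (v x) - η * dot (J x) (J x))
        = (∫ x : V3, -dot (cross (J x) (Bh x)) (v x))
          - ∫ x : V3, η * dot (J x) (J x) := integral_sub i3.neg (i4.const_mul _)
    have f3 : ∫ x : V3, -dot (cross (J x) (Bh x)) (v x)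
        = -∫ x : V3, dot (cross (J x) (Bh x)) (v x) := integral_neg _
    have f4 : ∫ x : V3, η * dot (J x) (J x)
        = η * ∫ x : V3, dot (J x) (J x) := integral_const_mul _ _
    linarith [f1, f2, f3, f4]
  rw [step1, step2, step3]
  ring

end
end
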